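/- arXiv:1308.5730 — 2 statements merged into one kernel-verified Lean document; each statement's English description precedes it below -/
import Mathlib

section
/- Consider the polymer Gibbs measure ℙ_N^{β,h} on walks S ∈ 𝕎_N with Hamiltonian ℍ_N(S) = -∑_{1≤i<j≤N} V_{ij}⟨X_i, X_j⟩ + ⟨h, S_N⟩, and the one-dimensional Ising Gibbs measures P_{Λ_N}^{β/2, h₁} and P_{Λ_N}^{β/2, h₂} on {-1,1}^N with Hamiltonian H(σ) = -∑_{i<j} V_{ij} σ_i σ_j - k∑_i σ_i (k = h₁ resp. h₂), where h₁ = ⟨h, e₁-e₂⟩ and h₂ = ⟨h, e₁+e₂⟩. Under the spin decomposition X_i ↔ (σ_i, σ̃_i), the polymer measure factorizes: ℙ_N^{β,h}(S) = P_{Λ_N}^{β/2, h₁}(σ) · P_{Λ_N}^{β/2, h₂}(σ̃). -/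
open Finset Real

noncomputable section

/-- The spin value `±1` associated to a Boolean. -/
def spin (b : Bool) : ℝ := if b then 1 else -1

/-- The set of ordered pairs `i < j` of sites in `Λ_N = {1, …, N}`. -/
def pairs (N : ℕ) : Finset (Fin N × Fin N) :=
  Finset.univ.filter (fun p => p.1 < p.2)

/-- Ising Hamiltonian on `Λ_N` with free boundary conditions, coupling matrix
`J` and external field `k`: `H(σ) = -∑_{i<j} J_{ij} σ_i σ_j - k ∑_i σ_i`. -/
def isingH (N : ℕ) (J : Fin N → Fin N → ℝ) (k : ℝ) (σ : Fin N → Bool) : ℝ :=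
  -(∑ p ∈ pairs N, J p.1 p.2 * spin (σ p.1) * spin (σ p.2)) -
    k * ∑ i, spin (σ i)

/-- Ising partition function at inverse temperature `β`. -/
def isingZ (N : ℕ) (J : Fin N → Fin N → ℝ) (β k : ℝ) : ℝ :=
  ∑ σ : Fin N → Bool, exp (-β * isingH N J k σ)

/-- Ising Gibbs probability of a configuration `σ`. -/
def isingP (N : ℕ) (J : Fin N → Fin N → ℝ) (β k : ℝ) (σ : Fin N → Bool) : ℝ :=
  exp (-β * isingH N J k σ) / isingZ N J β k

/-- Two-point function `⟨σ_i σ_j⟩` of the Ising Gibbs measure. -/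
def isingCorr (N : ℕ) (J : Fin N → Fin N → ℝ) (β k : ℝ) (i j : Fin N) : ℝ :=
  ∑ σ : Fin N → Bool, spin (σ i) * spin (σ j) * isingP N J β k σ

/-- Magnetization `⟨σ_i⟩` of the Ising Gibbs measure. -/
def isingMag (N : ℕ) (J : Fin N → Fin N → ℝ) (β k : ℝ) (i : Fin N) : ℝ :=
  ∑ σ : Fin N → Bool, spin (σ i) * isingP N J β k σ

/-- The unit step of `ℤ²` associated (via the rotated-frame spin decomposition)
to a pair of spins. Each of the four spin pairs corresponds to one of the four
unit steps `±e₁, ±e₂`. -/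
def stepOf : Bool × Bool → ℤ × ℤ
  | (true, true) => (-1, 0)
  | (true, false) => (0, 1)
  | (false, true) => (0, -1)
  | (false, false) => (1, 0)

/-- Polymer Hamiltonian on `N`-step walks with increments `X`:
`ℍ_N(S) = -∑_{1≤i<j≤N} V_{ij} ⟨X_i, X_j⟩ + ⟨h, S_N⟩`, where `S_N = ∑_i X_i`. -/
def polyH (N : ℕ) (V : Fin N → Fin N → ℝ) (h : ℝ × ℝ) (X : Fin N → ℤ × ℤ) : ℝ :=
  -(∑ p ∈ pairs N, V p.1 p.2 *
      (((X p.1).1 * (X p.2).1 + (X p.1).2 * (X p.2).2 : ℤ) : ℝ)) +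
    (h.1 * ((∑ i, (X i).1 : ℤ) : ℝ) + h.2 * ((∑ i, (X i).2 : ℤ) : ℝ))

/-- Polymer partition function `ℤ_N^β(h)`; walks in `𝕎_N` are enumerated by
their spin pairs via the bijection `X_i ↔ (σ_i, σ̃_i)`. -/
def polyZ (N : ℕ) (V : Fin N → Fin N → ℝ) (β : ℝ) (h : ℝ × ℝ) : ℝ :=
  ∑ c : Fin N → Bool × Bool, exp (-β * polyH N V h (fun i => stepOf (c i)))

/-- The polymer Gibbs probability `ℙ_N^{β,h}` of a walk (encoded by spins). -/
def polyP (N : ℕ) (V : Fin N → Fin N → ℝ) (β : ℝ) (h : ℝ × ℝ)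
    (c : Fin N → Bool × Bool) : ℝ :=
  exp (-β * polyH N V h (fun i => stepOf (c i))) / polyZ N V β h

/-!
The four unit steps of `ℤ²` are the vectors `(-(σ + σ̃), σ - σ̃)/2` for `σ, σ̃ = ±1`, an orthogonal
frame rotated by `π/4` and scaled by `1/√2`. Hence `⟨X_i, X_j⟩ = (σ_iσ_j + σ̃_iσ̃_j)/2` and the
endpoint field splits along the two diagonals, so the polymer Hamiltonian is half the sum of two
Ising Hamiltonians in `σ` and `σ̃`. The Boltzmann weight therefore factorizes, and summing it over
`(Fin N → Bool × Bool) ≃ (Fin N → Bool) × (Fin N → Bool)` factorizes the partition function.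
-/

theorem Fintype.sum_arrow_prod_mul {ι α β R : Type*} [Fintype ι] [DecidableEq ι]
    [Fintype α] [Fintype β] [CommSemiring R] (f : (ι → α) → R) (g : (ι → β) → R) :
    ∑ c : ι → α × β, f (fun i => (c i).1) * g (fun i => (c i).2) =
      (∑ σ, f σ) * ∑ τ, g τ := by
  rw [Fintype.sum_mul_sum, ← Fintype.sum_prod_type',
    ← (Equiv.arrowProdEquivProdArrow ι (fun _ => α) (fun _ => β)).sum_comp]
  rfl

lemma stepOf_fst (a : Bool × Bool) :
    ((stepOf a).1 : ℝ) = -(spin a.1 + spin a.2) / 2 := by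
  rcases a with ⟨_ | _, _ | _⟩ <;> norm_num [stepOf, spin]

lemma stepOf_snd (a : Bool × Bool) :
    ((stepOf a).2 : ℝ) = (spin a.1 - spin a.2) / 2 := by
  rcases a with ⟨_ | _, _ | _⟩ <;> norm_num [stepOf, spin]

lemma stepOf_inner (a b : Bool × Bool) :
    (((stepOf a).1 * (stepOf b).1 + (stepOf a).2 * (stepOf b).2 : ℤ) : ℝ) =
      (spin a.1 * spin b.1 + spin a.2 * spin b.2) / 2 := by
  push_cast
  rw [stepOf_fst, stepOf_fst, stepOf_snd, stepOf_snd]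
  ring

lemma polyH_stepOf (N : ℕ) (V : Fin N → Fin N → ℝ) (h : ℝ × ℝ) (c : Fin N → Bool × Bool) :
    polyH N V h (fun i => stepOf (c i)) =
      (isingH N V (h.1 - h.2) (fun i => (c i).1) +
        isingH N V (h.1 + h.2) (fun i => (c i).2)) / 2 := by
  have hpairs : ∑ p ∈ pairs N, V p.1 p.2 *
      (((stepOf (c p.1)).1 * (stepOf (c p.2)).1 +
        (stepOf (c p.1)).2 * (stepOf (c p.2)).2 : ℤ) : ℝ) =
      ((∑ p ∈ pairs N, V p.1 p.2 * spin (c p.1).1 * spin (c p.2).1) +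
        ∑ p ∈ pairs N, V p.1 p.2 * spin (c p.1).2 * spin (c p.2).2) / 2 := by
    simp only [stepOf_inner, ← sum_add_distrib, sum_div]
    exact sum_congr rfl fun _ _ => by ring
  have hfst : ((∑ i, (stepOf (c i)).1 : ℤ) : ℝ) =
      -((∑ i, spin (c i).1) + ∑ i, spin (c i).2) / 2 := by
    push_cast
    simp only [stepOf_fst, ← sum_div, sum_neg_distrib, sum_add_distrib]
  have hsnd : ((∑ i, (stepOf (c i)).2 : ℤ) : ℝ) =
      ((∑ i, spin (c i).1) - ∑ i, spin (c i).2) / 2 := by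
    push_cast
    simp only [stepOf_snd, ← sum_div, sum_sub_distrib]
  rw [polyH, isingH, isingH, hpairs, hfst, hsnd]
  ring

lemma exp_neg_mul_polyH_stepOf (N : ℕ) (V : Fin N → Fin N → ℝ) (β : ℝ) (h : ℝ × ℝ)
    (c : Fin N → Bool × Bool) :
    exp (-β * polyH N V h (fun i => stepOf (c i))) =
      exp (-(β / 2) * isingH N V (h.1 - h.2) (fun i => (c i).1)) *
        exp (-(β / 2) * isingH N V (h.1 + h.2) (fun i => (c i).2)) := by
  rw [← exp_add, polyH_stepOf]
  congr 1
  ring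

lemma polyZ_eq_isingZ_mul_isingZ (N : ℕ) (V : Fin N → Fin N → ℝ) (β : ℝ) (h : ℝ × ℝ) :
    polyZ N V β h = isingZ N V (β / 2) (h.1 - h.2) * isingZ N V (β / 2) (h.1 + h.2) := by
  simp only [polyZ, isingZ, exp_neg_mul_polyH_stepOf]
  exact Fintype.sum_arrow_prod_mul (fun σ => exp (-(β / 2) * isingH N V (h.1 - h.2) σ))
    (fun τ => exp (-(β / 2) * isingH N V (h.1 + h.2) τ))

theorem polymer_measure_factorization_general (N : ℕ) (V : Fin N → Fin N → ℝ)
    (β : ℝ) (h : ℝ × ℝ) (c : Fin N → Bool × Bool) :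
    polyP N V β h c =
      isingP N V (β / 2) (h.1 - h.2) (fun i => (c i).1) *
      isingP N V (β / 2) (h.1 + h.2) (fun i => (c i).2) := by
  rw [polyP, isingP, isingP, exp_neg_mul_polyH_stepOf, polyZ_eq_isingZ_mul_isingZ,
    div_mul_div_comm]

/-- Factorization of the polymer Gibbs measure. Under the spin
decomposition `X_i ↔ (σ_i, σ̃_i)` of walks into pairs of spin configurations,
the polymer Gibbs measure with Hamiltonian
`ℍ_N(S) = -∑_{i<j} V_{ij}⟨X_i,X_j⟩ + ⟨h,S_N⟩` factorizes into the product of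
two 1D Ising Gibbs measures at inverse temperature `β/2` and fields
`h₁ = ⟨h, e₁-e₂⟩`, `h₂ = ⟨h, e₁+e₂⟩`:
`ℙ_N^{β,h}(S) = P_{Λ_N}^{β/2,h₁}(σ) · P_{Λ_N}^{β/2,h₂}(σ̃)`. -/
theorem polymer_measure_factorization (N : ℕ) (V : Fin N → Fin N → ℝ)
    (β : ℝ) (hβ : 0 < β) (h : ℝ × ℝ) (c : Fin N → Bool × Bool) :
    polyP N V β h c =
      isingP N V (β / 2) (h.1 - h.2) (fun i => (c i).1) *
      isingP N V (β / 2) (h.1 + h.2) (fun i => (c i).2) :=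
  polymer_measure_factorization_general N V β h c

end
end

section
/- Second Griffiths inequality (correlation lower bound): for the ferromagnetic Ising model on {1,...,N} with couplings V_{ij} ≥ 0 and field k ≥ 0, ⟨σ_iσ_j⟩ ≥ ⟨σ_i⟩⟨σ_j⟩ for all i, j. -/
open Finset Real

noncomputable section

/-!
Ginibre's duplication trick. Twice the covariance `⟨σ_i σ_j⟩ - ⟨σ_i⟩⟨σ_j⟩` is the expectation of
`(σ_i - τ_i)(σ_j - τ_j)` over two independent copies `σ, τ` of the Gibbs measure. Substituting
`τ = σ t` (sitewise product of spins) for fixed `t`, this factor becomes `(1 - t_i)(1 - t_j) σ_i σ_j`,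
and `-βH(σ) - βH(σ t)` is again a ferromagnetic Hamiltonian in `σ`, with couplings
`β J_{ij} (1 + t_i t_j)` and fields `β k (1 + t_l)`. Since `exp (c σ^A) = cosh c + sinh c σ^A` for a
monomial `σ^A`, the summand is a polynomial in the spins with nonnegative coefficients, and the sum of
such a polynomial over all configurations is nonnegative because each monomial sums to `0` or `2^N`
(the first Griffiths inequality).
-/

open scoped NNReal

lemma spin_mul_self (b : Bool) : spin b * spin b = 1 := by
  cases b <;> norm_num [spin]

lemma spin_beq (a b : Bool) : spin (a == b) = spin a * spin b := by
  cases a <;> cases b <;> norm_num [spin]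

lemma neg_one_le_spin (b : Bool) : -1 ≤ spin b := by
  cases b <;> norm_num [spin]

lemma spin_le_one (b : Bool) : spin b ≤ 1 := by
  cases b <;> norm_num [spin]

lemma sum_spin_pow_nonneg (n : ℕ) : 0 ≤ ∑ b : Bool, spin b ^ n := by
  rw [Fintype.sum_bool]
  rcases Nat.even_or_odd n with h | h <;> simp [spin, h.neg_one_pow]

lemma Fintype.sum_comp_beq {α M : Type*} [Fintype α] [DecidableEq α] [AddCommMonoid M]
    (s : α → Bool) (F : (α → Bool) → M) :
    ∑ t : α → Bool, F (fun l => s l == t l) = ∑ t, F t := by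
  refine Fintype.sum_bijective (fun t l => s l == t l)
    (Function.Involutive.bijective fun t => ?_) _ _ fun _ => rfl
  funext l
  show (s l == (s l == t l)) = t l
  cases s l <;> cases t l <;> rfl

lemma sum_sum_sub_mul_sub_mul_mul {X : Type*} [Fintype X] (f g w : X → ℝ) :
    ∑ x, ∑ y, (f x - f y) * (g x - g y) * (w x * w y) =
      2 * ((∑ x, f x * g x * w x) * ∑ x, w x - (∑ x, f x * w x) * ∑ x, g x * w x) := by
  calc ∑ x, ∑ y, (f x - f y) * (g x - g y) * (w x * w y)
      = ∑ x, ∑ y, (f x * g x * w x) * w y - ∑ x, ∑ y, (f x * w x) * (g y * w y)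
          - ∑ x, ∑ y, (g x * w x) * (f y * w y) + ∑ x, ∑ y, w x * (f y * g y * w y) := by
        simp only [← sum_sub_distrib, ← sum_add_distrib]
        exact sum_congr rfl fun x _ => sum_congr rfl fun y _ => by ring
    _ = _ := by simp only [← sum_mul_sum]; ring

section SpinPolynomials

variable {α : Type*}

def spinCoord (l : α) (s : α → Bool) : ℝ := spin (s l)

def nonnegSpinPolynomials (α : Type*) : Subalgebra ℝ≥0 ((α → Bool) → ℝ) :=
  Algebra.adjoin ℝ≥0 (Set.range spinCoord)

lemma spinCoord_mul_self (l : α) : spinCoord l * spinCoord l = 1 :=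
  funext fun s => spin_mul_self (s l)

lemma spinCoord_mem_nonnegSpinPolynomials (l : α) :
    spinCoord l ∈ nonnegSpinPolynomials α :=
  Algebra.subset_adjoin ⟨l, rfl⟩

lemma smul_mem_nonnegSpinPolynomials {c : ℝ} (hc : 0 ≤ c) {f : (α → Bool) → ℝ}
    (hf : f ∈ nonnegSpinPolynomials α) : c • f ∈ nonnegSpinPolynomials α :=
  Subalgebra.smul_mem _ hf (⟨c, hc⟩ : ℝ≥0)

lemma exp_mul_mem_nonnegSpinPolynomials {c : ℝ} (hc : 0 ≤ c) {f : (α → Bool) → ℝ}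
    (hf : f ∈ nonnegSpinPolynomials α) (hf_sq : f * f = 1) :
    (fun s => exp (c * f s)) ∈ nonnegSpinPolynomials α := by
  have hexp : (fun s => exp (c * f s)) = cosh c • (1 : (α → Bool) → ℝ) + sinh c • f := by
    funext s
    rcases mul_self_eq_one_iff.mp (congr_fun hf_sq s) with h | h <;>
      simp [h, cosh_add_sinh, cosh_sub_sinh, ← sub_eq_add_neg]
  rw [hexp]
  exact add_mem (smul_mem_nonnegSpinPolynomials (cosh_pos c).le (one_mem _))
    (smul_mem_nonnegSpinPolynomials (sinh_nonneg_iff.mpr hc) hf)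

variable [Fintype α] [DecidableEq α]

lemma sum_prod_spin_pow_nonneg (e : α → ℕ) : 0 ≤ ∑ s : α → Bool, ∏ l, spin (s l) ^ e l := by
  rw [← Fintype.prod_sum (fun l b => spin b ^ e l)]
  exact prod_nonneg fun l _ => sum_spin_pow_nonneg (e l)

lemma sum_nonneg_of_mem_closure_spinCoord {f : (α → Bool) → ℝ}
    (hf : f ∈ Submonoid.closure (Set.range (spinCoord (α := α)))) : 0 ≤ ∑ s, f s := by
  suffices ∃ e : α → ℕ, f = fun s => ∏ l, spin (s l) ^ e l by
    obtain ⟨e, rfl⟩ := this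
    exact sum_prod_spin_pow_nonneg e
  induction hf using Submonoid.closure_induction with
  | mem _ h =>
    obtain ⟨l, rfl⟩ := h
    refine ⟨Pi.single l 1, funext fun s => ?_⟩
    simp [spinCoord, Pi.single_apply, pow_ite]
  | one => exact ⟨0, by funext s; simp⟩
  | mul _ _ _ _ hf hg =>
    obtain ⟨e, rfl⟩ := hf
    obtain ⟨e', rfl⟩ := hg
    exact ⟨e + e', funext fun s => by simp [pow_add, prod_mul_distrib]⟩

theorem sum_nonneg_of_mem_nonnegSpinPolynomials {f : (α → Bool) → ℝ}
    (hf : f ∈ nonnegSpinPolynomials α) : 0 ≤ ∑ s, f s := by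
  rw [nonnegSpinPolynomials, ← Subalgebra.mem_toSubmodule, Algebra.adjoin_eq_span] at hf
  induction hf using Submodule.span_induction with
  | mem _ h => exact sum_nonneg_of_mem_closure_spinCoord h
  | zero => simp
  | add _ _ _ _ hf hg => simpa [sum_add_distrib] using add_nonneg hf hg
  | smul c _ _ hf => simpa [NNReal.smul_def, ← mul_sum] using mul_nonneg c.2 hf

end SpinPolynomials

def isingWeight (N : ℕ) (J : Fin N → Fin N → ℝ) (β k : ℝ) (σ : Fin N → Bool) : ℝ :=
  exp (-β * isingH N J k σ)

section Ising

variable {N : ℕ} {J : Fin N → Fin N → ℝ} {β k : ℝ}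

lemma neg_mul_isingH_add_neg_mul_isingH_beq (s t : Fin N → Bool) :
    -β * isingH N J k s + -β * isingH N J k (fun l => s l == t l) =
      ∑ p ∈ pairs N, β * J p.1 p.2 * (1 + spin (t p.1 == t p.2)) * (spin (s p.1) * spin (s p.2)) +
        ∑ l, β * k * (1 + spin (t l)) * spin (s l) := by
  have hpairs : ∑ p ∈ pairs N, β * J p.1 p.2 * (1 + spin (t p.1 == t p.2)) *
        (spin (s p.1) * spin (s p.2)) =
      β * ∑ p ∈ pairs N, J p.1 p.2 * spin (s p.1) * spin (s p.2) +
        β * ∑ p ∈ pairs N, J p.1 p.2 * spin (s p.1 == t p.1) * spin (s p.2 == t p.2) := by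
    rw [mul_sum, mul_sum, ← sum_add_distrib]
    exact sum_congr rfl fun p _ => by simp only [spin_beq]; ring
  have hfield : ∑ l, β * k * (1 + spin (t l)) * spin (s l) =
      β * (k * ∑ l, spin (s l)) + β * (k * ∑ l, spin (s l == t l)) := by
    rw [mul_sum, mul_sum, mul_sum, mul_sum, ← sum_add_distrib]
    exact sum_congr rfl fun l _ => by simp only [spin_beq]; ring
  rw [hpairs, hfield, isingH, isingH]
  ring

lemma isingWeight_mul_isingWeight_beq_mem (hJ : ∀ i j, 0 ≤ J i j) (hβ : 0 ≤ β) (hk : 0 ≤ k)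
    (t : Fin N → Bool) :
    (fun s => isingWeight N J β k s * isingWeight N J β k (fun l => s l == t l)) ∈
      nonnegSpinPolynomials (Fin N) := by
  have hsplit : (fun s => isingWeight N J β k s * isingWeight N J β k (fun l => s l == t l)) =
      (∏ p ∈ pairs N, fun s => exp (β * J p.1 p.2 * (1 + spin (t p.1 == t p.2)) *
        (spinCoord p.1 s * spinCoord p.2 s))) *
      ∏ l, fun s => exp (β * k * (1 + spin (t l)) * spinCoord l s) := by
    funext s
    simp only [isingWeight, ← exp_add, neg_mul_isingH_add_neg_mul_isingH_beq, Pi.mul_apply,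
      prod_apply, ← exp_sum, spinCoord]
  have hcoeff (b : Bool) : 0 ≤ 1 + spin b := by linarith [neg_one_le_spin b]
  rw [hsplit]
  refine mul_mem (prod_mem fun p _ => ?_) (prod_mem fun l _ => ?_)
  · refine exp_mul_mem_nonnegSpinPolynomials (f := spinCoord p.1 * spinCoord p.2)
      (mul_nonneg (mul_nonneg hβ (hJ p.1 p.2)) (hcoeff _))
      (mul_mem (spinCoord_mem_nonnegSpinPolynomials _) (spinCoord_mem_nonnegSpinPolynomials _)) ?_
    rw [mul_mul_mul_comm, spinCoord_mul_self, spinCoord_mul_self, one_mul]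
  · exact exp_mul_mem_nonnegSpinPolynomials (mul_nonneg (mul_nonneg hβ hk) (hcoeff _))
      (spinCoord_mem_nonnegSpinPolynomials l) (spinCoord_mul_self l)

lemma sum_sum_spin_sub_mul_spin_sub_mul_isingWeight_nonneg (hJ : ∀ i j, 0 ≤ J i j) (hβ : 0 ≤ β)
    (hk : 0 ≤ k) (i j : Fin N) :
    0 ≤ ∑ σ, ∑ τ, (spin (σ i) - spin (τ i)) * (spin (σ j) - spin (τ j)) *
      (isingWeight N J β k σ * isingWeight N J β k τ) := by
  rw [sum_congr rfl fun s _ => (Fintype.sum_comp_beq s _).symm, sum_comm]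
  refine sum_nonneg fun t _ => sum_nonneg_of_mem_nonnegSpinPolynomials ?_
  have hfactor : (fun s => (spin (s i) - spin (s i == t i)) * (spin (s j) - spin (s j == t j)) *
        (isingWeight N J β k s * isingWeight N J β k (fun l => s l == t l))) =
      (1 - spin (t i)) • spinCoord i * (1 - spin (t j)) • spinCoord j *
        fun s => isingWeight N J β k s * isingWeight N J β k (fun l => s l == t l) := by
    funext s
    simp only [spin_beq, Pi.mul_apply, Pi.smul_apply, spinCoord, smul_eq_mul]
    ring
  have hcoeff (b : Bool) : 0 ≤ 1 - spin b := by linarith [spin_le_one b]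
  rw [hfactor]
  exact mul_mem (mul_mem
    (smul_mem_nonnegSpinPolynomials (hcoeff _) (spinCoord_mem_nonnegSpinPolynomials i))
    (smul_mem_nonnegSpinPolynomials (hcoeff _) (spinCoord_mem_nonnegSpinPolynomials j)))
    (isingWeight_mul_isingWeight_beq_mem hJ hβ hk t)

end Ising

/-- Second Griffiths inequality. For the ferromagnetic Ising
model on `{1, …, N}` with couplings `J_{ij} ≥ 0`, field `k ≥ 0` and inverse
temperature `β > 0`, `⟨σ_i σ_j⟩ ≥ ⟨σ_i⟩⟨σ_j⟩` for all `i, j`. -/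
theorem second_griffiths_inequality (N : ℕ) (J : Fin N → Fin N → ℝ)
    (hJ : ∀ i j, 0 ≤ J i j) (β k : ℝ) (hβ : 0 < β) (hk : 0 ≤ k) (i j : Fin N) :
    isingMag N J β k i * isingMag N J β k j ≤ isingCorr N J β k i j := by
  have hZ : 0 < isingZ N J β k := sum_pos (fun σ _ => exp_pos _) univ_nonempty
  have hP (σ) : isingP N J β k σ = isingWeight N J β k σ / isingZ N J β k := rfl
  have htotal : ∑ σ, isingP N J β k σ = 1 := by
    simp only [hP, ← sum_div]
    exact div_self hZ.ne'
  have hdup : 0 ≤ ∑ σ, ∑ τ, (spin (σ i) - spin (τ i)) * (spin (σ j) - spin (τ j)) *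
      (isingP N J β k σ * isingP N J β k τ) := by
    have hPP (σ τ) : isingP N J β k σ * isingP N J β k τ =
        isingWeight N J β k σ * isingWeight N J β k τ / (isingZ N J β k * isingZ N J β k) := by
      rw [hP, hP, div_mul_div_comm]
    simp only [hPP, ← mul_div_assoc, ← sum_div]
    exact div_nonneg (sum_sum_spin_sub_mul_spin_sub_mul_isingWeight_nonneg hJ hβ.le hk i j)
      (mul_self_nonneg _)
  rw [sum_sum_sub_mul_sub_mul_mul, htotal] at hdup
  simp only [isingMag, isingCorr]
  linarith
end
end
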